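/- arXiv:1401.3534 — 4 statements merged into one kernel-verified Lean document; each statement's English description precedes it below -/
import Mathlib

section
/- Let A be an associative algebra over a field and τ : A → A a Rota–Baxter operator of weight 1, i.e., τ(a)τ(b) = τ(τ(a)b + aτ(b) + ab) for all a,b ∈ A. Define three bilinear products on A by a ≻ b := τ(a)b, a ≺ b := aτ(b), a ⊥ b := ab. Then (A, ≻, ≺, ⊥) is a tridendriform (post-associative) algebra, i.e., for all a,b,c ∈ A: (a≺b)≺c = a≺(b≺c + b≻c + b⊥c), (a≻b)≺c = a≻(b≺c), a≻(b≻c) = (a≺b + a≻b + a⊥b)≻c, (a≻b)⊥c = a≻(b⊥c), (a≺b)⊥c = a⊥(b≻c), (a⊥b)≺c = a⊥(b≺c), and (a⊥b)⊥c = a⊥(b⊥c). -/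
section RotaBaxter

variable {A : Type*} [NonUnitalSemiring A] {τ : A → A}
  (hτ : ∀ a b : A, τ a * τ b = τ (τ a * b + a * τ b + a * b))
include hτ

theorem mul_rotaBaxter_mul_rotaBaxter (a b c : A) :
    a * τ b * τ c = a * τ (b * τ c + τ b * c + b * c) := by
  rw [mul_assoc, hτ, add_comm (τ b * c)]

theorem rotaBaxter_mul_rotaBaxter_mul (a b c : A) :
    τ a * (τ b * c) = τ (a * τ b + τ a * b + a * b) * c := by
  rw [← mul_assoc, hτ, add_comm (τ a * b)]

end RotaBaxter

theorem rotaBaxter_weight_one_tridendriform_general {k A : Type*} [Field k]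
    [NonUnitalRing A] [Module k A]
    (τ : A →ₗ[k] A) (hτ : ∀ a b : A, τ a * τ b = τ (τ a * b + a * τ b + a * b)) :
    (∀ a b c : A, (a * τ b) * τ c = a * τ (b * τ c + τ b * c + b * c)) ∧
    (∀ a b c : A, (τ a * b) * τ c = τ a * (b * τ c)) ∧
    (∀ a b c : A, τ a * (τ b * c) = τ (a * τ b + τ a * b + a * b) * c) ∧
    (∀ a b c : A, (τ a * b) * c = τ a * (b * c)) ∧
    (∀ a b c : A, (a * τ b) * c = a * (τ b * c)) ∧
    (∀ a b c : A, (a * b) * τ c = a * (b * τ c)) ∧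
    (∀ a b c : A, (a * b) * c = a * (b * c)) :=
  ⟨mul_rotaBaxter_mul_rotaBaxter hτ, fun _ _ _ => mul_assoc _ _ _,
    rotaBaxter_mul_rotaBaxter_mul hτ, fun _ _ _ => mul_assoc _ _ _,
    fun _ _ _ => mul_assoc _ _ _, fun _ _ _ => mul_assoc _ _ _, fun _ _ _ => mul_assoc _ _ _⟩

/-- A Rota–Baxter operator `τ` of weight 1 on an associative algebra `A` yields
a tridendriform (post-associative) algebra structure
`a ≻ b := τ(a)b`, `a ≺ b := aτ(b)`, `a ⊥ b := ab`. -/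
theorem rotaBaxter_weight_one_tridendriform {k A : Type*} [Field k]
    [NonUnitalRing A] [Module k A] (hassoc : ∀ a b c : A, (a * b) * c = a * (b * c))
    (τ : A →ₗ[k] A) (hτ : ∀ a b : A, τ a * τ b = τ (τ a * b + a * τ b + a * b)) :
    (∀ a b c : A, (a * τ b) * τ c = a * τ (b * τ c + τ b * c + b * c)) ∧
    (∀ a b c : A, (τ a * b) * τ c = τ a * (b * τ c)) ∧
    (∀ a b c : A, τ a * (τ b * c) = τ (a * τ b + τ a * b + a * b) * c) ∧
    (∀ a b c : A, (τ a * b) * c = τ a * (b * c)) ∧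
    (∀ a b c : A, (a * τ b) * c = a * (τ b * c)) ∧
    (∀ a b c : A, (a * b) * τ c = a * (b * τ c)) ∧
    (∀ a b c : A, (a * b) * c = a * (b * c)) :=
  rotaBaxter_weight_one_tridendriform_general τ hτ
end

section
/- Let D be a left-symmetric (pre-Lie) algebra over a field and P a Perm algebra. On the tensor product P ⊗ D define the bracket [x⊗a, y⊗b] := xy ⊗ (a·b) − yx ⊗ (b·a). Then P ⊗ D with this bracket is a Lie algebra (the bracket is alternating and satisfies the Jacobi identity). -/
/-!
Both identities are multilinear in their arguments, so it suffices to check them on pure tensors.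
There, the Perm identity lets one swap the first two factors of any triple product in `P`, and
left symmetry rewrites `(ab)c - (ba)c` as `a(bc) - b(ac)`; after these rewrites the twelve terms
of the Jacobi sum cancel in pairs.
-/

open TensorProduct

section TensorProduct

variable {R M N Q : Type*} [CommRing R] [AddCommGroup M] [Module R M] [AddCommGroup N] [Module R N]
  [AddCommGroup Q] [Module R Q]

theorem TensorProduct.apply_self_eq_zero_of_tmul (B : M ⊗[R] N →ₗ[R] M ⊗[R] N →ₗ[R] Q)
    (hdiag : ∀ x a, B (x ⊗ₜ a) (x ⊗ₜ a) = 0)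
    (hskew : ∀ x a y b, B (x ⊗ₜ a) (y ⊗ₜ b) + B (y ⊗ₜ b) (x ⊗ₜ a) = 0) (u : M ⊗[R] N) :
    B u u = 0 := by
  have skew : B + B.flip = 0 := ext' fun x a => ext' fun y b => hskew x a y b
  induction u using TensorProduct.induction_on with
  | zero => simp
  | tmul x a => exact hdiag x a
  | add u₁ u₂ ih₁ ih₂ =>
    simp only [map_add, LinearMap.add_apply]
    rw [add_add_add_comm, ih₁, ih₂, add_zero, zero_add]
    exact congr($skew u₁ u₂)

theorem TensorProduct.cyclic_sum_eq_zero_of_tmul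
    (T : M ⊗[R] N →ₗ[R] M ⊗[R] N →ₗ[R] M ⊗[R] N →ₗ[R] Q)
    (h : ∀ x a y b z c, T (x ⊗ₜ a) (y ⊗ₜ b) (z ⊗ₜ c) + T (y ⊗ₜ b) (z ⊗ₜ c) (x ⊗ₜ a)
      + T (z ⊗ₜ c) (x ⊗ₜ a) (y ⊗ₜ b) = 0) (u v w : M ⊗[R] N) :
    T u v w + T v w u + T w u v = 0 := by
  -- `rotate T u v w = T v w u`, as a trilinear map
  let rotate (T : M ⊗[R] N →ₗ[R] M ⊗[R] N →ₗ[R] M ⊗[R] N →ₗ[R] Q) :=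
    (LinearMap.lflip.toLinearMap ∘ₗ T).flip
  have cyclic : T + rotate T + rotate (rotate T) = 0 :=
    ext' fun x a => ext' fun y b => ext' fun z c => h x a y b z c
  exact congr($cyclic u v w)

end TensorProduct

section PermTensorPreLie

variable {k P D : Type*} [CommRing k] [NonUnitalRing P] [Module k P] [AddCommGroup D] [Module k D]
  {mul : D →ₗ[k] D →ₗ[k] D} {B : P ⊗[k] D →ₗ[k] P ⊗[k] D →ₗ[k] P ⊗[k] D}

theorem bracket_tmul_self
    (hB : ∀ (x y : P) (a b : D), B (x ⊗ₜ a) (y ⊗ₜ b) = (x * y) ⊗ₜ mul a b - (y * x) ⊗ₜ mul b a)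
    (x : P) (a : D) : B (x ⊗ₜ a) (x ⊗ₜ a) = 0 := by
  rw [hB, sub_self]

theorem bracket_tmul_add_bracket_tmul_swap
    (hB : ∀ (x y : P) (a b : D), B (x ⊗ₜ a) (y ⊗ₜ b) = (x * y) ⊗ₜ mul a b - (y * x) ⊗ₜ mul b a)
    (x : P) (a : D) (y : P) (b : D) : B (x ⊗ₜ a) (y ⊗ₜ b) + B (y ⊗ₜ b) (x ⊗ₜ a) = 0 := by
  rw [hB, hB, sub_add_sub_cancel', sub_self]

theorem bracket_bracket_tmul (hperm : ∀ x y z : P, (x * y) * z = (y * x) * z)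
    (hlsym : ∀ a b c : D,
      mul (mul a b) c - mul a (mul b c) = mul (mul b a) c - mul b (mul a c))
    (hB : ∀ (x y : P) (a b : D), B (x ⊗ₜ a) (y ⊗ₜ b) = (x * y) ⊗ₜ mul a b - (y * x) ⊗ₜ mul b a)
    (x y z : P) (a b c : D) :
    B (B (x ⊗ₜ a) (y ⊗ₜ b)) (z ⊗ₜ c) = (x * y * z) ⊗ₜ (mul a (mul b c) - mul b (mul a c))
      - (z * x * y) ⊗ₜ mul c (mul a b) + (z * y * x) ⊗ₜ mul c (mul b a) := by
  have hD := sub_eq_sub_iff_sub_eq_sub.mp (hlsym a b c)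
  simp only [hB, map_sub, LinearMap.sub_apply, ← mul_assoc, hperm y x z, ← hD, tmul_sub]
  abel

theorem jacobi_tmul (hperm : ∀ x y z : P, (x * y) * z = (y * x) * z)
    (hlsym : ∀ a b c : D,
      mul (mul a b) c - mul a (mul b c) = mul (mul b a) c - mul b (mul a c))
    (hB : ∀ (x y : P) (a b : D), B (x ⊗ₜ a) (y ⊗ₜ b) = (x * y) ⊗ₜ mul a b - (y * x) ⊗ₜ mul b a)
    (x : P) (a : D) (y : P) (b : D) (z : P) (c : D) :
    B (B (x ⊗ₜ a) (y ⊗ₜ b)) (z ⊗ₜ c) + B (B (y ⊗ₜ b) (z ⊗ₜ c)) (x ⊗ₜ a)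
      + B (B (z ⊗ₜ c) (x ⊗ₜ a)) (y ⊗ₜ b) = 0 := by
  simp only [bracket_bracket_tmul hperm hlsym hB, hperm z y x, hperm x z y, hperm y x z, tmul_sub]
  abel

end PermTensorPreLie

/-- If `D` is a left-symmetric (pre-Lie) algebra and `P` a Perm algebra over a
field `k`, then the bracket on `P ⊗ D` determined by
`[x⊗a, y⊗b] = xy ⊗ a·b − yx ⊗ b·a` makes `P ⊗ D` a Lie algebra:
it is alternating and satisfies the Jacobi identity. -/
theorem perm_tensor_preLie_is_lie {k P D : Type*} [Field k]
    [NonUnitalRing P] [Module k P]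
    (hperm : ∀ x y z : P, (x * y) * z = (y * x) * z)
    [AddCommGroup D] [Module k D] (mul : D →ₗ[k] D →ₗ[k] D)
    (hlsym : ∀ a b c : D,
      mul (mul a b) c - mul a (mul b c) = mul (mul b a) c - mul b (mul a c))
    (B : P ⊗[k] D →ₗ[k] P ⊗[k] D →ₗ[k] P ⊗[k] D)
    (hB : ∀ (x y : P) (a b : D),
      B (x ⊗ₜ a) (y ⊗ₜ b) = (x * y) ⊗ₜ (mul a b) - (y * x) ⊗ₜ (mul b a)) :
    (∀ u : P ⊗[k] D, B u u = 0) ∧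
    (∀ u v w : P ⊗[k] D, B (B u v) w + B (B v w) u + B (B w u) v = 0) :=
  ⟨apply_self_eq_zero_of_tmul B (bracket_tmul_self hB) (bracket_tmul_add_bracket_tmul_swap hB),
    cyclic_sum_eq_zero_of_tmul (B.compr₂ B) (jacobi_tmul hperm hlsym hB)⟩
end

section
/- Let A be an associative algebra over a field and t : A → A an averaging operator, i.e., a linear map with t(a)t(b) = t(t(a)b) = t(a t(b)) for all a,b ∈ A. Define two bilinear products on A by a ⊣ b := a t(b) and a ⊢ b := t(a) b. Then (A, ⊣, ⊢) is an associative dialgebra: for all a,b,c ∈ A, a⊣(b⊣c) = (a⊣b)⊣c = a⊣(b⊢c), (a⊢b)⊣c = a⊢(b⊣c), and a⊢(b⊢c) = (a⊢b)⊢c = (a⊣b)⊢c. -/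
structure IsAveragingOperator {A : Type*} [Mul A] (t : A → A) : Prop where
  apply_mul_apply_eq_apply_apply_mul : ∀ a b, t a * t b = t (t a * b)
  apply_mul_apply_eq_apply_mul_apply : ∀ a b, t a * t b = t (a * t b)

namespace IsAveragingOperator

variable {A : Type*} [Semigroup A] {t : A → A} (ht : IsAveragingOperator t)
include ht

theorem apply_mul_apply_comm (a b : A) : t (a * t b) = t (t a * b) := by
  rw [← ht.apply_mul_apply_eq_apply_mul_apply, ht.apply_mul_apply_eq_apply_apply_mul]

theorem mul_apply_mul_apply (a b c : A) : a * t (b * t c) = a * t b * t c := by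
  rw [← ht.apply_mul_apply_eq_apply_mul_apply, mul_assoc]

theorem apply_mul_apply_mul (a b c : A) : t a * (t b * c) = t (t a * b) * c := by
  rw [← ht.apply_mul_apply_eq_apply_apply_mul, mul_assoc]

end IsAveragingOperator

theorem averaging_gives_dialgebra_general {k A : Type*} [Field k] [NonUnitalRing A]
    [Module k A]
    (t : A →ₗ[k] A)
    (ht1 : ∀ a b : A, t a * t b = t (t a * b))
    (ht2 : ∀ a b : A, t a * t b = t (a * t b)) :
    (∀ a b c : A, a * t (b * t c) = (a * t b) * t c) ∧
    (∀ a b c : A, a * t (b * t c) = a * t (t b * c)) ∧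
    (∀ a b c : A, (t a * b) * t c = t a * (b * t c)) ∧
    (∀ a b c : A, t a * (t b * c) = t (t a * b) * c) ∧
    (∀ a b c : A, t a * (t b * c) = t (a * t b) * c) := by
  have ht : IsAveragingOperator t := ⟨ht1, ht2⟩
  refine ⟨ht.mul_apply_mul_apply, fun a b c => ?_, fun a b c => mul_assoc _ _ _,
    ht.apply_mul_apply_mul, fun a b c => ?_⟩
  · rw [ht.apply_mul_apply_comm]
  · rw [ht.apply_mul_apply_comm, ht.apply_mul_apply_mul]

/-- An averaging operator `t` on an associative algebra `A` yields an
associative dialgebra structure `a ⊣ b := a t(b)`, `a ⊢ b := t(a) b`. -/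
theorem averaging_gives_dialgebra {k A : Type*} [Field k] [NonUnitalRing A]
    [Module k A] (hassoc : ∀ a b c : A, (a * b) * c = a * (b * c))
    (t : A →ₗ[k] A)
    (ht1 : ∀ a b : A, t a * t b = t (t a * b))
    (ht2 : ∀ a b : A, t a * t b = t (a * t b)) :
    (∀ a b c : A, a * t (b * t c) = (a * t b) * t c) ∧
    (∀ a b c : A, a * t (b * t c) = a * t (t b * c)) ∧
    (∀ a b c : A, (t a * b) * t c = t a * (b * t c)) ∧
    (∀ a b c : A, t a * (t b * c) = t (t a * b) * c) ∧
    (∀ a b c : A, t a * (t b * c) = t (a * t b) * c) :=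
  averaging_gives_dialgebra_general t ht1 ht2
end

section
/- Let L be a Lie algebra over a field and t : L → L an averaging operator, i.e., [t(a), t(b)] = t([t(a), b]) = t([a, t(b)]) for all a,b ∈ L. Define a bilinear product on L by a * b := [a, t(b)]. Then (L, *) is a (right) Leibniz algebra: (a*b)*c = (a*c)*b + a*(b*c) for all a,b,c ∈ L. -/
theorem lie_lie_eq_lie_lie_add_lie {L : Type*} [LieRing L] (a x y : L) :
    ⁅⁅a, x⁆, y⁆ = ⁅⁅a, y⁆, x⁆ + ⁅a, ⁅x, y⁆⁆ := by
  rw [lie_lie, ← lie_skew x ⁅a, y⁆]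
  abel

theorem averaging_lie_gives_leibniz_general {k L : Type*} [Field k] [LieRing L]
    [LieAlgebra k L] (t : L →ₗ[k] L)
    (ht2 : ∀ a b : L, ⁅t a, t b⁆ = t ⁅a, t b⁆) :
    ∀ a b c : L, ⁅⁅a, t b⁆, t c⁆ = ⁅⁅a, t c⁆, t b⁆ + ⁅a, t ⁅b, t c⁆⁆ := by
  intro a b c
  rw [← ht2]
  exact lie_lie_eq_lie_lie_add_lie a (t b) (t c)

/-- An averaging operator `t` on a Lie algebra `L` yields a right Leibniz
algebra structure `a * b := [a, t(b)]`. -/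
theorem averaging_lie_gives_leibniz {k L : Type*} [Field k] [LieRing L]
    [LieAlgebra k L] (t : L →ₗ[k] L)
    (ht1 : ∀ a b : L, ⁅t a, t b⁆ = t ⁅t a, b⁆)
    (ht2 : ∀ a b : L, ⁅t a, t b⁆ = t ⁅a, t b⁆) :
    ∀ a b c : L, ⁅⁅a, t b⁆, t c⁆ = ⁅⁅a, t c⁆, t b⁆ + ⁅a, t ⁅b, t c⁆⁆ :=
  averaging_lie_gives_leibniz_general t ht2
end
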